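/- arXiv:1502.06284 — 2 statements merged into one kernel-verified Lean document; each statement's English description precedes it below -/
import Mathlib

section
/- Let Γ ⊆ ℤ² be a finite set and φ a state on Γ. If v₁,…,v_m and u₁,…,u_k are two legal toppling sequences for φ whose resulting states φ + ΔH_m and φ + ΔH'_k are both stable (≤ 3 at every vertex of Γ), then the two toppling count functions coincide: H_m(v) = H'_k(v) for every v ∈ ℤ². (Uniqueness of the toppling function of a stabilizing relaxation.) -/
/-- The discrete Laplacian on `ℤ × ℤ`: sum over the four grid neighbors minus `4` times
the value at the point. -/
def lap (H : ℤ × ℤ → ℤ) (v : ℤ × ℤ) : ℤ :=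
  H (v.1 + 1, v.2) + H (v.1 - 1, v.2) + H (v.1, v.2 + 1) + H (v.1, v.2 - 1) - 4 * H v

/-- `topCount s i u` is the number of indices `j < i` with `s j = u`
(the toppling count after `i` steps). -/
def topCount (s : ℕ → ℤ × ℤ) (i : ℕ) (u : ℤ × ℤ) : ℤ :=
  (((Finset.range i).filter (fun j => s j = u)).card : ℤ)

/-- The first `m` terms of `s` form a legal toppling sequence for the state `φ` on `Γ`:
each toppled vertex lies in `Γ` and is unstable (has ≥ 4 grains) at the moment of toppling. -/
def Legal (Γ : Set (ℤ × ℤ)) (φ : ℤ × ℤ → ℤ) (s : ℕ → ℤ × ℤ) (m : ℕ) : Prop :=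
  ∀ i < m, s i ∈ Γ ∧ 4 ≤ φ (s i) + lap (topCount s i) (s i)



lemma topCount_succ (s : ℕ → ℤ × ℤ) (i : ℕ) (u : ℤ × ℤ) :
    topCount s (i+1) u = topCount s i u + (if s i = u then 1 else 0) := by
  unfold topCount
  rw [Finset.range_add_one, Finset.filter_insert]
  split
  · rw [Finset.card_insert_of_notMem (by simp)]; push_cast; ring
  · simp

lemma topCount_nonneg (s : ℕ → ℤ × ℤ) (i : ℕ) (u : ℤ × ℤ) : 0 ≤ topCount s i u :=
  Int.ofNat_nonneg _

lemma le_count (Γ : Set (ℤ × ℤ)) (φ : ℤ × ℤ → ℤ)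
    (s t : ℕ → ℤ × ℤ) (m k : ℕ)
    (hs : Legal Γ φ s m)
    (hstabt : ∀ v ∈ Γ, φ v + lap (topCount t k) v ≤ 3) :
    ∀ i ≤ m, ∀ v, topCount s i v ≤ topCount t k v := by
  intro i
  induction i with
  | zero =>
    intro _ v
    simpa [topCount] using topCount_nonneg t k v
  | succ n ih =>
    intro hn v
    have ihv := ih (Nat.le_of_succ_le hn)
    rw [topCount_succ]
    by_cases h : s n = v
    · simp only [h, if_pos]
      by_contra hlt
      push_neg at hlt
      have heq : topCount s n v = topCount t k v := le_antisymm (ihv v) (by linarith)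
      obtain ⟨hmem, hun⟩ := hs n (by omega)
      rw [h] at hmem hun
      have hlap : lap (topCount s n) v ≤ lap (topCount t k) v := by
        have h1 := ihv (v.1 + 1, v.2)
        have h2 := ihv (v.1 - 1, v.2)
        have h3 := ihv (v.1, v.2 + 1)
        have h4 := ihv (v.1, v.2 - 1)
        unfold lap
        linarith
      have := hstabt v hmem
      linarith
    · simp only [h, if_neg, not_false_iff]
      simpa using ihv v

/-- Uniqueness of the toppling function: two stabilizing legal relaxations of the same
state on a finite `Γ ⊆ ℤ²` have the same toppling count function. -/
theorem toppling_function_unique (Γ : Set (ℤ × ℤ)) (hΓ : Γ.Finite) (φ : ℤ × ℤ → ℤ)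
    (hφ0 : ∀ v, 0 ≤ φ v) (hφΓ : ∀ v, v ∉ Γ → φ v = 0)
    (s t : ℕ → ℤ × ℤ) (m k : ℕ)
    (hs : Legal Γ φ s m) (ht : Legal Γ φ t k)
    (hstabs : ∀ v ∈ Γ, φ v + lap (topCount s m) v ≤ 3)
    (hstabt : ∀ v ∈ Γ, φ v + lap (topCount t k) v ≤ 3) :
    ∀ v, topCount s m v = topCount t k v := by
  intro v
  exact le_antisymm (le_count Γ φ s t m k hs hstabt m le_rfl v)
    (le_count Γ φ t s k m ht hstabs k le_rfl v)
end

section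
/- Let p₀, q₀, p₁, q₁, p₂, q₂ ∈ ℤ with p₁q₂ − p₂q₁ = 1, define f₀(x, y) = min(0, p₁x + q₁y, p₂x + q₂y) + p₀x + q₀y on ℤ², let C = {v : Δf₀(v) < 0}, let 𝔉_n be the set of superharmonic functions f : ℤ² → ℤ with f₀ − n ≤ f ≤ f₀ and f = f₀ outside some bounded neighborhood of C, and let f_n(v) = min_{f∈𝔉_n} f(v). If f₀ is monotone in a direction e ∈ ℤ², i.e. f₀(v + e) ≤ f₀(v) for all v ∈ ℤ², then f_n is monotone in the same direction: f_n(v + e) ≤ f_n(v) for all v ∈ ℤ². -/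
/-- Two points of `ℤ²` are adjacent if their Euclidean distance is `1`. -/
def Adj (a b : ℤ × ℤ) : Prop :=
  (a.1 - b.1) ^ 2 + (a.2 - b.2) ^ 2 = 1

/-- Euclidean distance between two points of `ℤ²`. -/
noncomputable def dst (v w : ℤ × ℤ) : ℝ :=
  Real.sqrt (((v.1 - w.1 : ℤ) : ℝ) ^ 2 + ((v.2 - w.2 : ℤ) : ℝ) ^ 2)

/-- The corner function `f₀(x,y) = min(0, p₁x + q₁y, p₂x + q₂y) + p₀x + q₀y`. -/
def f0 (p₀ q₀ p₁ q₁ p₂ q₂ : ℤ) (v : ℤ × ℤ) : ℤ :=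
  min (min 0 (p₁ * v.1 + q₁ * v.2)) (p₂ * v.1 + q₂ * v.2) + p₀ * v.1 + q₀ * v.2

/-- The set where the Laplacian of `f₀` is negative (the discrete tropical corner). -/
def Cset (p₀ q₀ p₁ q₁ p₂ q₂ : ℤ) : Set (ℤ × ℤ) :=
  {v | lap (f0 p₀ q₀ p₁ q₁ p₂ q₂) v < 0}

/-- The family `𝔉ₙ` of superharmonic functions squeezed between `f₀ − n` and `f₀` and
equal to `f₀` outside some bounded neighborhood of `C`. -/
def FF (p₀ q₀ p₁ q₁ p₂ q₂ : ℤ) (n : ℕ) : Set ((ℤ × ℤ) → ℤ) :=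
  {f | (∀ v, lap f v ≤ 0) ∧
       (∀ v, f0 p₀ q₀ p₁ q₁ p₂ q₂ v - n ≤ f v ∧ f v ≤ f0 p₀ q₀ p₁ q₁ p₂ q₂ v) ∧
       ∃ r : ℝ, 0 < r ∧ ∀ v, (∀ c ∈ Cset p₀ q₀ p₁ q₁ p₂ q₂, r ≤ dst v c) →
         f v = f0 p₀ q₀ p₁ q₁ p₂ q₂ v}

/-- The pointwise minimum `fₙ` of the family `𝔉ₙ`. -/
noncomputable def fmin (p₀ q₀ p₁ q₁ p₂ q₂ : ℤ) (n : ℕ) (v : ℤ × ℤ) : ℤ :=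
  sInf {x : ℤ | ∃ f ∈ FF p₀ q₀ p₁ q₁ p₂ q₂ n, f v = x}


/-!
Translating a member `f` of `𝔉ₙ` by `e` and taking `w ↦ min (f w) (f (w - e))` stays in `𝔉ₙ`:
a minimum of superharmonic functions is superharmonic, monotonicity of `f₀` gives
`f₀ w ≤ f₀ (w - e)` so the lower bound `f₀ - n` survives, and the translate agrees with `f₀`
outside a neighborhood of `C` enlarged by `|e|`. Evaluating this competitor at `v + e` gives
`fₙ (v + e) ≤ f v` for every `f ∈ 𝔉ₙ`.
-/

lemma lap_le_of_le_of_eq {f g : ℤ × ℤ → ℤ} {v : ℤ × ℤ} (hle : ∀ w, f w ≤ g w)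
    (heq : f v = g v) : lap f v ≤ lap g v := by
  simp only [lap, heq]
  linarith [hle (v.1 + 1, v.2), hle (v.1 - 1, v.2), hle (v.1, v.2 + 1), hle (v.1, v.2 - 1)]

lemma lap_min_nonpos {f g : ℤ × ℤ → ℤ} (hf : ∀ v, lap f v ≤ 0) (hg : ∀ v, lap g v ≤ 0)
    (v : ℤ × ℤ) : lap (fun w => min (f w) (g w)) v ≤ 0 := by
  rcases min_choice (f v) (g v) with h | h
  · exact (lap_le_of_le_of_eq (fun w => min_le_left _ _) h).trans (hf v)
  · exact (lap_le_of_le_of_eq (fun w => min_le_right _ _) h).trans (hg v)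

lemma lap_linear (a b : ℤ) (v : ℤ × ℤ) : lap (fun w => a * w.1 + b * w.2) v = 0 := by
  simp only [lap]
  ring

lemma lap_comp_sub (f : ℤ × ℤ → ℤ) (e v : ℤ × ℤ) :
    lap (fun w => f (w - e)) v = lap f (v - e) := by
  simp only [lap, Prod.sub_def]
  ring_nf

lemma f0_eq_min_linear (p₀ q₀ p₁ q₁ p₂ q₂ : ℤ) :
    f0 p₀ q₀ p₁ q₁ p₂ q₂ = fun v =>
      min (min (p₀ * v.1 + q₀ * v.2) ((p₁ + p₀) * v.1 + (q₁ + q₀) * v.2))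
        ((p₂ + p₀) * v.1 + (q₂ + q₀) * v.2) := by
  funext v
  simp only [f0]
  rw [add_assoc, ← min_add_add_right, ← min_add_add_right]
  ring_nf

lemma lap_f0_nonpos (p₀ q₀ p₁ q₁ p₂ q₂ : ℤ) (v : ℤ × ℤ) :
    lap (f0 p₀ q₀ p₁ q₁ p₂ q₂) v ≤ 0 := by
  have hlin (a b : ℤ) (w : ℤ × ℤ) : lap (fun w => a * w.1 + b * w.2) w ≤ 0 :=
    (lap_linear a b w).le
  rw [f0_eq_min_linear]
  exact lap_min_nonpos (lap_min_nonpos (hlin _ _) (hlin _ _)) (hlin _ _) v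

/-- `ℤ²` sits in `ℂ` as the Gaussian integers, which makes `dst` the distance of `ℂ`. -/
noncomputable def toComplex (v : ℤ × ℤ) : ℂ := ⟨v.1, v.2⟩

lemma dst_eq_dist (v w : ℤ × ℤ) : dst v w = dist (toComplex v) (toComplex w) := by
  simp only [dst, toComplex, Complex.dist_eq, Complex.norm_def, Complex.normSq_apply,
    Complex.sub_re, Complex.sub_im]
  push_cast
  ring_nf

lemma dst_triangle (u v w : ℤ × ℤ) : dst u w ≤ dst u v + dst v w := by
  simpa only [dst_eq_dist] using dist_triangle (toComplex u) (toComplex v) (toComplex w)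

lemma dst_sub_right (v e : ℤ × ℤ) : dst v (v - e) = dst e 0 := by
  simp only [dst, Prod.fst_sub, Prod.snd_sub, Prod.fst_zero, Prod.snd_zero, sub_sub_cancel,
    sub_zero]

section Family

variable {p₀ q₀ p₁ q₁ p₂ q₂ : ℤ} {n : ℕ}

lemma f0_mem_FF : f0 p₀ q₀ p₁ q₁ p₂ q₂ ∈ FF p₀ q₀ p₁ q₁ p₂ q₂ n :=
  ⟨lap_f0_nonpos _ _ _ _ _ _, fun _ => ⟨by omega, le_rfl⟩, 1, one_pos, fun _ _ => rfl⟩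

lemma fmin_le {f : ℤ × ℤ → ℤ} (hf : f ∈ FF p₀ q₀ p₁ q₁ p₂ q₂ n) (v : ℤ × ℤ) :
    fmin p₀ q₀ p₁ q₁ p₂ q₂ n v ≤ f v :=
  csInf_le ⟨f0 p₀ q₀ p₁ q₁ p₂ q₂ v - n, by rintro _ ⟨g, hg, rfl⟩; exact (hg.2.1 v).1⟩
    ⟨f, hf, rfl⟩

lemma le_fmin {v : ℤ × ℤ} {x : ℤ} (h : ∀ f ∈ FF p₀ q₀ p₁ q₁ p₂ q₂ n, x ≤ f v) :
    x ≤ fmin p₀ q₀ p₁ q₁ p₂ q₂ n v :=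
  le_csInf ⟨_, _, f0_mem_FF, rfl⟩ (by rintro _ ⟨f, hf, rfl⟩; exact h f hf)

lemma eq_f0_comp_sub_of_far {f : ℤ × ℤ → ℤ} {r : ℝ} (e : ℤ × ℤ)
    (hfar : ∀ v, (∀ c ∈ Cset p₀ q₀ p₁ q₁ p₂ q₂, r ≤ dst v c) → f v = f0 p₀ q₀ p₁ q₁ p₂ q₂ v)
    {w : ℤ × ℤ} (hw : ∀ c ∈ Cset p₀ q₀ p₁ q₁ p₂ q₂, r + dst e 0 ≤ dst w c) :
    f (w - e) = f0 p₀ q₀ p₁ q₁ p₂ q₂ (w - e) :=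
  hfar _ fun c hc => by
    linarith [hw c hc, dst_triangle w (w - e) c, dst_sub_right w e]

lemma min_comp_sub_mem_FF {e : ℤ × ℤ}
    (hmono : ∀ w, f0 p₀ q₀ p₁ q₁ p₂ q₂ w ≤ f0 p₀ q₀ p₁ q₁ p₂ q₂ (w - e))
    {f : ℤ × ℤ → ℤ} (hf : f ∈ FF p₀ q₀ p₁ q₁ p₂ q₂ n) :
    (fun w => min (f w) (f (w - e))) ∈ FF p₀ q₀ p₁ q₁ p₂ q₂ n := by
  obtain ⟨hlap, hbd, r, hr, hfar⟩ := hf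
  have he : 0 ≤ dst e 0 := Real.sqrt_nonneg _
  refine ⟨lap_min_nonpos hlap fun w => by rw [lap_comp_sub]; exact hlap _, fun w => ?_,
    r + dst e 0, by linarith, fun w hw => ?_⟩
  · have := hmono w
    have := hbd w
    have := hbd (w - e)
    exact ⟨le_min (by omega) (by omega), (min_le_left _ _).trans (hbd w).2⟩
  · dsimp only
    rw [hfar w fun c hc => by linarith [hw c hc], eq_f0_comp_sub_of_far e hfar hw]
    exact min_eq_left (hmono w)

end Family

theorem fmin_monotone_general (p₀ q₀ p₁ q₁ p₂ q₂ : ℤ)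
    (n : ℕ) (e : ℤ × ℤ)
    (hmono : ∀ v : ℤ × ℤ, f0 p₀ q₀ p₁ q₁ p₂ q₂ (v + e) ≤ f0 p₀ q₀ p₁ q₁ p₂ q₂ v) :
    ∀ v : ℤ × ℤ,
      fmin p₀ q₀ p₁ q₁ p₂ q₂ n (v + e) ≤ fmin p₀ q₀ p₁ q₁ p₂ q₂ n v := by
  have hmono' (w : ℤ × ℤ) : f0 p₀ q₀ p₁ q₁ p₂ q₂ w ≤ f0 p₀ q₀ p₁ q₁ p₂ q₂ (w - e) := by
    simpa using hmono (w - e)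
  intro v
  refine le_fmin fun f hf => ?_
  calc fmin p₀ q₀ p₁ q₁ p₂ q₂ n (v + e) ≤ min (f (v + e)) (f (v + e - e)) :=
        fmin_le (min_comp_sub_mem_FF hmono' hf) (v + e)
    _ ≤ f v := by simp

/-- If `f₀` is monotone in a direction `e ∈ ℤ²`, then the pointwise minimizer `fₙ` of the
family `𝔉ₙ` is monotone in the same direction. -/
theorem fmin_monotone (p₀ q₀ p₁ q₁ p₂ q₂ : ℤ)
    (hdet : p₁ * q₂ - p₂ * q₁ = 1) (n : ℕ) (e : ℤ × ℤ)
    (hmono : ∀ v : ℤ × ℤ, f0 p₀ q₀ p₁ q₁ p₂ q₂ (v + e) ≤ f0 p₀ q₀ p₁ q₁ p₂ q₂ v) :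
    ∀ v : ℤ × ℤ,
      fmin p₀ q₀ p₁ q₁ p₂ q₂ n (v + e) ≤ fmin p₀ q₀ p₁ q₁ p₂ q₂ n v :=
  fmin_monotone_general p₀ q₀ p₁ q₁ p₂ q₂ n e hmono
end
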